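/- Let x = 2/5 + (1/5)·i. For every z ∈ ℤ[i] with z and conj(z) coprime in ℤ[i] and every ε ∈ {1, −1, i, −i}, the reflection w ↦ ε·(z/conj(z))·conj(w) belongs to OC(x+Γ) if and only if 1 − 2i divides z in ℤ[i]. Moreover, OC(x+Γ) is not closed under composition: there exist T₁, T₂ ∈ OC(x+Γ) with T₁ ∘ T₂ ∉ OC(x+Γ), so OC(x+Γ) is not a subgroup of OC(Γ). -/

import Mathlib

open Pointwise Complex ComplexConjugate

/-- The square lattice `Γ = ℤ[i]`, i.e. the Gaussian integers viewed as an additive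
subgroup of `ℂ`. -/
noncomputable def Zi : AddSubgroup ℂ :=
  AddMonoidHom.range (GaussianInt.toComplex.toAddMonoidHom)

/-- `f` is (the underlying map of) a surjective real-linear isometry of `ℂ`. -/
def IsLinIso (f : ℂ → ℂ) : Prop := ∃ R : ℂ ≃ₗᵢ[ℝ] ℂ, ⇑R = f

/-- `f` is a rotation of `ℂ`, i.e. multiplication by a complex number of modulus 1. -/
def IsRotation (f : ℂ → ℂ) : Prop := ∃ u : ℂ, ‖u‖ = 1 ∧ ∀ w, f w = u * w

/-- `f` is a reflection of `ℂ`, i.e. `w ↦ u * conj w` for a complex number `u` of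
modulus 1. -/
def IsReflection (f : ℂ → ℂ) : Prop := ∃ u : ℂ, ‖u‖ = 1 ∧ ∀ w, f w = u * conj w

/-- The shifted square lattice `x + Γ` as a subset of `ℂ`. -/
noncomputable def shiftedZi (x : ℂ) : Set ℂ := x +ᵥ (Zi : Set ℂ)

/-- `OC (x+Γ)`: the set of (maps of) surjective real-linear isometries `f` of `ℂ` such
that `(x+Γ) ∩ f(x+Γ)` is a coset `c + Λ`, with `c ∈ x+Γ` and `Λ` a finite-index
additive subgroup of `Γ = ℤ[i]`. -/
noncomputable def OCs (x : ℂ) : Set (ℂ → ℂ) :=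
  {f | IsLinIso f ∧ ∃ c ∈ shiftedZi x, ∃ Λ : AddSubgroup ℂ, Λ ≤ Zi ∧
    Λ.relIndex Zi ≠ 0 ∧ shiftedZi x ∩ (f '' shiftedZi x) = c +ᵥ (Λ : Set ℂ)}

/-- `SOC (x+Γ)`: the rotations among the coincidence isometries of `x + Γ`. -/
noncomputable def SOCs (x : ℂ) : Set (ℂ → ℂ) := {f ∈ OCs x | IsRotation f}

/-!
Write the reflection as `T w = u * conj w` with `u = ε z / conj z`. Since `conj Γ = Γ`, any common
point `c` of `x + Γ` and `T (x + Γ)` exhibits their intersection as `c + (Γ ∩ uΓ)`, and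
coprimality of `z` and `conj z` gives `Γ ∩ uΓ = zΓ`, a sublattice of finite index. Hence
`T ∈ OC(x + Γ)` iff the two shifted lattices meet, which, by a Bézout relation
`p z + q conj z = 1`, happens iff `conj z * x - ε z * conj x ∈ Γ`. For `x = 1 / conj π` with
`π = 2 + i` this says that `π conj π = 5` divides `conj z * π - ε z * conj π`, i.e. `π ∣ z`; and
`1 - 2i` is an associate of `π`. The reflections with `z = π` and `ε = ±1` both lie in
`OC(x + Γ)`, but their composite is `w ↦ -w`, and `x + Γ` meets `-(x + Γ)` only if `2x ∈ Γ`.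
-/

open GaussianInt

lemma mul_star_dvd_sub_iff {R : Type*} [CommRing R] [StarRing R] {π z e : R}
    (hπ : IsCoprime π (star π)) (he : IsUnit e) :
    π * star π ∣ star z * π - e * z * star π ↔ π ∣ z := by
  constructor
  · intro h
    have : π ∣ e * z * star π :=
      (dvd_sub_right (dvd_mul_left π (star z))).mp ((dvd_mul_right π _).trans h)
    exact he.dvd_mul_left.mp (hπ.dvd_of_dvd_mul_right this)
  · rintro ⟨k, rfl⟩
    refine hπ.mul_dvd ⟨star (π * k) - e * k * star π, by ring⟩ ⟨star k * π - e * π * k, ?_⟩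
    rw [star_mul]; ring

-- Provides `Ring.HasFiniteQuotients GaussianInt`, hence the finite index of `zΓ` in `Γ`.
instance : Module.Finite ℤ GaussianInt :=
  Module.Finite.of_surjective
    (AddMonoidHom.mk' (fun p : ℤ × ℤ => (⟨p.1, p.2⟩ : GaussianInt))
      (fun _ _ => rfl)).toIntLinearMap
    fun g => ⟨(g.re, g.im), rfl⟩

lemma mem_Zi {w : ℂ} : w ∈ Zi ↔ ∃ g : GaussianInt, (g : ℂ) = w := Iff.rfl

lemma ne_zero_of_isCoprime_star {z : GaussianInt} (hz : IsCoprime z (star z)) : z ≠ 0 := by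
  rintro rfl
  exact not_isUnit_zero (isCoprime_zero_left.mp (by simpa using hz))

lemma norm_toComplex_of_isUnit {e : GaussianInt} (he : IsUnit e) : ‖(e : ℂ)‖ = 1 := by
  have h := intCast_real_norm e
  rw [(Zsqrtd.norm_eq_one_iff' (by norm_num) e).mpr he, Int.cast_one] at h
  rw [Complex.norm_def, ← h, Real.sqrt_one]

lemma coe_div_mem_Zi_iff {g n : GaussianInt} (hn : n ≠ 0) : (g : ℂ) / n ∈ Zi ↔ n ∣ g := by
  have hnC : (n : ℂ) ≠ 0 := by simpa using hn
  rw [mem_Zi]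
  constructor
  · rintro ⟨k, hk⟩
    exact ⟨k, toComplex_injective (by rw [map_mul, hk]; field_simp)⟩
  · rintro ⟨k, rfl⟩
    exact ⟨k, by rw [map_mul]; field_simp⟩

lemma exists_isUnit_toComplex_eq {ε : ℂ} (hε : ε ∈ ({1, -1, I, -I} : Set ℂ)) :
    ∃ e : GaussianInt, IsUnit e ∧ (e : ℂ) = ε := by
  rcases hε with rfl | rfl | rfl | rfl
  · exact ⟨1, isUnit_one, map_one _⟩
  · exact ⟨-1, isUnit_one.neg, by simp⟩
  · exact ⟨⟨0, 1⟩, IsUnit.of_mul_eq_one ⟨0, -1⟩ (by decide), by simp [toComplex_def']⟩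
  · exact ⟨⟨0, -1⟩, IsUnit.of_mul_eq_one ⟨0, 1⟩ (by decide), by simp [toComplex_def']⟩

lemma mem_shiftedZi {x w : ℂ} : w ∈ shiftedZi x ↔ ∃ g : GaussianInt, w = x + g := by
  simp only [shiftedZi, Set.mem_vadd_set, SetLike.mem_coe, mem_Zi, vadd_eq_add]
  constructor
  · rintro ⟨_, ⟨g, rfl⟩, rfl⟩; exact ⟨g, rfl⟩
  · rintro ⟨g, rfl⟩; exact ⟨g, ⟨g, rfl⟩, rfl⟩

lemma shiftedZi_eq_vadd_of_mem {x c : ℂ} (hc : c ∈ shiftedZi x) :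
    shiftedZi x = c +ᵥ (Zi : Set ℂ) := by
  obtain ⟨g, rfl⟩ := mem_shiftedZi.mp hc
  rw [shiftedZi, add_vadd, vadd_coe_set (mem_Zi.mpr ⟨g, rfl⟩)]

noncomputable def principalLattice (z : GaussianInt) : AddSubgroup ℂ :=
  (Ideal.span {z}).toAddSubgroup.map toComplex.toAddMonoidHom

lemma mem_principalLattice {z : GaussianInt} {w : ℂ} :
    w ∈ principalLattice z ↔ ∃ k : GaussianInt, ((z * k : GaussianInt) : ℂ) = w := by
  simp only [principalLattice, AddSubgroup.mem_map, Submodule.mem_toAddSubgroup,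
    Ideal.mem_span_singleton']
  constructor
  · rintro ⟨_, ⟨k, rfl⟩, rfl⟩; exact ⟨k, by rw [mul_comm]; rfl⟩
  · rintro ⟨k, rfl⟩; exact ⟨_, ⟨k, mul_comm k z⟩, rfl⟩

lemma relIndex_principalLattice_ne_zero {z : GaussianInt} (hz : z ≠ 0) :
    (principalLattice z).relIndex Zi ≠ 0 := by
  rw [principalLattice, Zi, AddMonoidHom.range_eq_map,
    AddSubgroup.relIndex_map_map_of_injective _ _ toComplex_injective,
    AddSubgroup.relIndex_top_right]
  exact (Ring.HasFiniteQuotients.cardQuot_pos _ (by simpa using hz)).ne'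

lemma inter_nonempty_of_mem_OCs {f : ℂ → ℂ} {x : ℂ} (hf : f ∈ OCs x) :
    (shiftedZi x ∩ f '' shiftedZi x).Nonempty := by
  obtain ⟨-, c, -, Λ, -, -, h⟩ := hf
  exact ⟨c, h ▸ ⟨0, Λ.zero_mem, add_zero c⟩⟩

theorem mem_OCs_of_mem_inter {f : ℂ → ℂ} (hf : IsLinIso f) {x c : ℂ}
    (hc : c ∈ shiftedZi x ∩ f '' shiftedZi x) {Λ : AddSubgroup ℂ}
    (hΛ : (Zi : Set ℂ) ∩ f '' Zi = Λ) (hΛZi : Λ.relIndex Zi ≠ 0) : f ∈ OCs x := by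
  obtain ⟨R, rfl⟩ := hf
  obtain ⟨hcx, y, hy, rfl⟩ := hc
  refine ⟨⟨R, rfl⟩, R y, hcx, Λ, fun w hw => ?_, hΛZi, ?_⟩
  · exact (hΛ.symm ▸ hw : w ∈ (Zi : Set ℂ) ∩ R '' Zi).1
  · rw [← hΛ, Set.vadd_set_inter, ← shiftedZi_eq_vadd_of_mem hcx, shiftedZi_eq_vadd_of_mem hy,
      Set.image_vadd_distrib]

lemma isLinIso_mul_conj {u : ℂ} (hu : ‖u‖ = 1) : IsLinIso fun w => u * conj w :=
  ⟨conjLIE.trans (rotation ⟨u, by simpa [Submonoid.unitSphere] using hu⟩), by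
    funext w; simp; rfl⟩

lemma mem_image_mul_conj_shiftedZi {u x w : ℂ} :
    w ∈ (fun w => u * conj w) '' shiftedZi x ↔ ∃ g : GaussianInt, w = u * (conj x + g) := by
  constructor
  · rintro ⟨v, hv, rfl⟩
    obtain ⟨g, rfl⟩ := mem_shiftedZi.mp hv
    exact ⟨star g, by simp only [map_add, toComplex_star]⟩
  · rintro ⟨g, rfl⟩
    exact ⟨x + ((star g : GaussianInt) : ℂ), mem_shiftedZi.mpr ⟨star g, rfl⟩,
      by simp only [map_add, toComplex_star, conj_conj]⟩

lemma mem_image_mul_conj_Zi {u w : ℂ} :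
    w ∈ (fun w => u * conj w) '' Zi ↔ ∃ g : GaussianInt, w = u * g := by
  simpa [shiftedZi] using mem_image_mul_conj_shiftedZi (u := u) (x := 0) (w := w)

section CoprimeReflection

variable {z e : GaussianInt} {u : ℂ}

lemma Zi_inter_image_mul_conj (hz : IsCoprime z (star z)) (he : IsUnit e)
    (hu : conj (z : ℂ) * u = e * z) :
    (Zi : Set ℂ) ∩ (fun w => u * conj w) '' Zi = principalLattice z := by
  obtain ⟨e', he'⟩ := he.exists_right_inv
  ext w
  simp only [Set.mem_inter_iff, SetLike.mem_coe, mem_Zi, mem_image_mul_conj_Zi,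
    mem_principalLattice]
  constructor
  · rintro ⟨⟨a, rfl⟩, b, hab⟩
    have hstar : star z * a = z * (e * b) := toComplex_injective <| by
      simp only [map_mul, toComplex_star]
      linear_combination conj (z : ℂ) * hab + (b : ℂ) * hu
    obtain ⟨k, rfl⟩ := hz.dvd_of_dvd_mul_left ⟨e * b, hstar⟩
    exact ⟨k, rfl⟩
  · rintro ⟨k, rfl⟩
    refine ⟨⟨z * k, rfl⟩, e' * star z * k, ?_⟩
    have he'C : (e : ℂ) * e' = 1 := by rw [← map_mul, he', map_one]
    simp only [map_mul, toComplex_star]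
    linear_combination -(e' : ℂ) * k * hu - (z : ℂ) * k * he'C

lemma inter_image_mul_conj_nonempty_iff (hz : IsCoprime z (star z)) (he : IsUnit e)
    (hu : conj (z : ℂ) * u = e * z) (x : ℂ) :
    (shiftedZi x ∩ (fun w => u * conj w) '' shiftedZi x).Nonempty ↔
      conj (z : ℂ) * x - e * z * conj x ∈ Zi := by
  simp only [Set.Nonempty, Set.mem_inter_iff, mem_shiftedZi, mem_image_mul_conj_shiftedZi,
    mem_Zi]
  constructor
  · rintro ⟨c, ⟨a, hca⟩, b, hcb⟩
    refine ⟨e * z * b - star z * a, ?_⟩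
    simp only [map_sub, map_mul, toComplex_star]
    linear_combination -(conj x + b) * hu + conj (z : ℂ) * (hca - hcb)
  · rintro ⟨g, hg⟩
    obtain ⟨e', he'⟩ := he.exists_right_inv
    have hz0 : conj (z : ℂ) ≠ 0 := by simpa using ne_zero_of_isCoprime_star hz
    obtain ⟨p, q, hpq⟩ := hz
    refine ⟨x + ↑(-(g * q)), ⟨_, rfl⟩, e' * g * p, mul_left_cancel₀ hz0 ?_⟩
    have hpqC := congrArg toComplex hpq
    have he'C := congrArg toComplex he'
    simp only [map_add, map_mul, map_neg, map_one, toComplex_star] at hpqC he'C ⊢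
    linear_combination -hg - g * hpqC - g * p * z * he'C - (conj x + e' * g * p) * hu

end CoprimeReflection

theorem reflection_mem_OCs_iff {z e : GaussianInt} (hz : IsCoprime z (star z))
    (he : IsUnit e) (x : ℂ) :
    (fun w => (e : ℂ) * ((z : ℂ) / conj (z : ℂ)) * conj w) ∈ OCs x ↔
      conj (z : ℂ) * x - e * z * conj x ∈ Zi := by
  have hz0 := ne_zero_of_isCoprime_star hz
  have hzC : (z : ℂ) ≠ 0 := by simpa using hz0
  have hu : conj (z : ℂ) * (e * (z / conj (z : ℂ))) = e * z := by
    have : conj (z : ℂ) ≠ 0 := (map_ne_zero _).mpr hzC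
    field_simp
  rw [← inter_image_mul_conj_nonempty_iff hz he hu]
  refine ⟨inter_nonempty_of_mem_OCs, fun ⟨c, hc⟩ => mem_OCs_of_mem_inter ?_ hc
    (Zi_inter_image_mul_conj hz he hu) (relIndex_principalLattice_ne_zero hz0)⟩
  exact isLinIso_mul_conj (by simp [norm_toComplex_of_isUnit he, hzC])

theorem reflection_mem_OCs_inv_conj_iff {π z e : GaussianInt}
    (hπ : IsCoprime π (star π)) (hz : IsCoprime z (star z)) (he : IsUnit e) :
    (fun w => (e : ℂ) * ((z : ℂ) / conj (z : ℂ)) * conj w) ∈ OCs (conj (π : ℂ))⁻¹ ↔ π ∣ z := by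
  have hπ0 := ne_zero_of_isCoprime_star hπ
  have hπC : (π : ℂ) ≠ 0 := by simpa using hπ0
  have hx : conj (z : ℂ) * (conj (π : ℂ))⁻¹ - e * z * conj (conj (π : ℂ))⁻¹ =
      ((star z * π - e * z * star π : GaussianInt) : ℂ) / ((π * star π : GaussianInt) : ℂ) := by
    have : conj (π : ℂ) ≠ 0 := (map_ne_zero _).mpr hπC
    simp only [map_sub, map_mul, toComplex_star, map_inv₀, conj_conj]
    field_simp
  rw [reflection_mem_OCs_iff hz he, hx,
    coe_div_mem_Zi_iff (mul_ne_zero hπ0 (star_ne_zero.mpr hπ0)), mul_star_dvd_sub_iff hπ he]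

lemma two_mul_mem_Zi_of_neg_mem_OCs {x : ℂ} (h : (fun w => -w) ∈ OCs x) : 2 * x ∈ Zi := by
  obtain ⟨c, hcx, v, hv, rfl⟩ := inter_nonempty_of_mem_OCs h
  obtain ⟨a, ha⟩ := mem_shiftedZi.mp hcx
  obtain ⟨b, rfl⟩ := mem_shiftedZi.mp hv
  exact mem_Zi.mpr ⟨-(a + b), by rw [map_neg, map_add]; linear_combination ha⟩

lemma mul_conj_comp_neg_mul_conj {v : ℂ} (hv : ‖v‖ = 1) :
    (fun w => 1 * v * conj w) ∘ (fun w => -1 * v * conj w) = fun w => -w := by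
  funext w
  simp only [Function.comp_apply, map_mul, map_neg, map_one, conj_conj]
  have hv' : v * conj v = 1 := by rw [mul_conj, normSq_eq_norm_sq, hv]; norm_num
  linear_combination (-w) * hv'

lemma two_fifths_add_fifth_I_eq_inv_conj :
    (2 / 5 + (1 / 5) * I : ℂ) = (conj ((⟨2, 1⟩ : GaussianInt) : ℂ))⁻¹ := by
  have h : conj ((⟨2, 1⟩ : GaussianInt) : ℂ) = 2 - I := by
    simp [toComplex_def', map_ofNat, sub_eq_add_neg]
  rw [h]
  refine eq_inv_of_mul_eq_one_left ?_
  linear_combination (-1 / 5 : ℂ) * I_sq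

lemma neg_not_mem_OCs_inv_conj_two_add_I :
    (fun w => -w) ∉ OCs (conj ((⟨2, 1⟩ : GaussianInt) : ℂ))⁻¹ := fun h => by
  have h2 := two_mul_mem_Zi_of_neg_mem_OCs h
  rw [← toComplex_star, ← div_eq_mul_inv, ← map_ofNat toComplex,
    coe_div_mem_Zi_iff (by decide)] at h2
  obtain ⟨k, hk⟩ := h2
  have hre := congrArg Zsqrtd.re hk
  have him := congrArg Zsqrtd.im hk
  simp [Zsqrtd.re_mul, Zsqrtd.im_mul] at hre him
  omega

theorem OC_of_two_fifths_plus_fifth_I :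
    (∀ z : GaussianInt, IsCoprime z (star z) → ∀ ε ∈ ({1, -1, I, -I} : Set ℂ),
        ((fun w => ε * ((z : ℂ) / conj (z : ℂ)) * conj w) ∈ OCs (2 / 5 + (1 / 5) * I) ↔
          (⟨1, -2⟩ : GaussianInt) ∣ z)) ∧
      (∃ T₁ ∈ OCs (2 / 5 + (1 / 5) * I), ∃ T₂ ∈ OCs (2 / 5 + (1 / 5) * I),
        T₁ ∘ T₂ ∉ OCs (2 / 5 + (1 / 5) * I)) ∧
      ¬(id ∈ OCs (2 / 5 + (1 / 5) * I) ∧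
          (∀ f ∈ OCs (2 / 5 + (1 / 5) * I), ∀ g ∈ OCs (2 / 5 + (1 / 5) * I),
            f ∘ g ∈ OCs (2 / 5 + (1 / 5) * I)) ∧
          (∀ f ∈ OCs (2 / 5 + (1 / 5) * I), ∀ g : ℂ → ℂ, g ∘ f = id → f ∘ g = id →
            g ∈ OCs (2 / 5 + (1 / 5) * I))) := by
  set x : ℂ := 2 / 5 + (1 / 5) * I
  set π : GaussianInt := ⟨2, 1⟩
  have hx : x = (conj (π : ℂ))⁻¹ := two_fifths_add_fifth_I_eq_inv_conj
  have hπ : IsCoprime π (star π) := ⟨⟨2, 1⟩, ⟨0, -2⟩, by decide⟩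
  have hdvd (z : GaussianInt) : (⟨1, -2⟩ : GaussianInt) ∣ z ↔ π ∣ z :=
    ⟨dvd_trans ⟨⟨0, -1⟩, by decide⟩, dvd_trans ⟨⟨0, 1⟩, by decide⟩⟩
  have hmem : ∀ z : GaussianInt, IsCoprime z (star z) → ∀ ε ∈ ({1, -1, I, -I} : Set ℂ),
      ((fun w => ε * ((z : ℂ) / conj (z : ℂ)) * conj w) ∈ OCs x ↔
        (⟨1, -2⟩ : GaussianInt) ∣ z) := by
    intro z hz ε hε
    obtain ⟨e, he, rfl⟩ := exists_isUnit_toComplex_eq hε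
    rw [hx, reflection_mem_OCs_inv_conj_iff hπ hz he, hdvd]
  have hcomp : ∃ T₁ ∈ OCs x, ∃ T₂ ∈ OCs x, T₁ ∘ T₂ ∉ OCs x := by
    have hπdvd := (hdvd π).mpr dvd_rfl
    refine ⟨_, (hmem π hπ 1 (by simp)).mpr hπdvd, _, (hmem π hπ (-1) (by simp)).mpr hπdvd, ?_⟩
    have hπC : (π : ℂ) ≠ 0 := by simpa using ne_zero_of_isCoprime_star hπ
    rw [mul_conj_comp_neg_mul_conj (by simp [hπC]), hx]
    exact neg_not_mem_OCs_inv_conj_two_add_I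
  obtain ⟨T₁, h₁, T₂, h₂, h₁₂⟩ := hcomp
  exact ⟨hmem, ⟨T₁, h₁, T₂, h₂, h₁₂⟩, fun ⟨_, hclosed, _⟩ => h₁₂ (hclosed T₁ h₁ T₂ h₂)⟩
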